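/- For all Hermitian matrices Z and W' indexed by (Fin d_a) × J_k, one has ‖A(Z)‖² + ‖T(Z) − W'‖² ≤ ((d_k + 2d)/d) · (‖Z‖² + ‖W'‖²) (the smoothness bound used for the projected-gradient method on the PST least-squares problem). -/

import Mathlib

open Matrix
open scoped Kronecker ComplexOrder

noncomputable section

instance monoDecidable {k d : ℕ} : DecidablePred (Monotone : (Fin k → Fin d) → Prop) :=
  fun f => decidable_of_iff (∀ a b : Fin k, a ≤ b → f a ≤ f b) Iff.rfl

/-- `Jk d k` : nondecreasing sequences of length `k` from `{0, …, d-1}`. -/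
abbrev Jk (d k : ℕ) := {f : Fin k → Fin d // Monotone f}

/-- the nondecreasing rearrangement of a sequence. -/
def sortTuple {d k : ℕ} (i : Fin k → Fin d) : Jk d k :=
  ⟨i ∘ Tuple.sort i, Tuple.monotone_sort i⟩

/-- `permCount j` : the number of sequences whose sorted rearrangement is `j`. -/
def permCount {d k : ℕ} (j : Jk d k) : ℕ :=
  (Finset.univ.filter fun i : Fin k → Fin d => sortTuple i = j).card

/-- The scaled partition matrix `P`. -/
def Pmat (d k : ℕ) : Matrix (Fin k → Fin d) (Jk d k) ℂ :=
  fun i j => if sortTuple i = j then (((permCount j : ℝ) ^ (-(1/2) : ℝ) : ℝ) : ℂ) else 0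

/-- `cons0 b r` is the sequence `b⌢r` sending `0` to `b` and `s+1` to `r s`. -/
def cons0 {d k : ℕ} (b : Fin d) (r : Fin (k - 1) → Fin d) : Fin k → Fin d :=
  fun s => if h : (s : ℕ) = 0 then b else r ⟨(s : ℕ) - 1, by have := s.isLt; omega⟩

/-- Partial trace over the last `k - 1` factors. -/
def PTr (da d k : ℕ)
    (M : Matrix (Fin da × (Fin k → Fin d)) (Fin da × (Fin k → Fin d)) ℂ) :
    Matrix (Fin da × Fin d) (Fin da × Fin d) ℂ :=
  fun p q => ∑ r : Fin (k - 1) → Fin d, M (p.1, cons0 p.2 r) (q.1, cons0 q.2 r)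

/-- The operator `A`. -/
def Amap (da d k : ℕ) (X : Matrix (Fin da × Jk d k) (Fin da × Jk d k) ℂ) :
    Matrix (Fin da × Fin d) (Fin da × Fin d) ℂ :=
  PTr da d k (((1 : Matrix (Fin da) (Fin da) ℂ) ⊗ₖ Pmat d k) * X *
    ((1 : Matrix (Fin da) (Fin da) ℂ) ⊗ₖ Pmat d k)ᴴ)

/-- The extension operator `E` : `E(W) ((a,i),(a',i')) = W ((a, i 0), (a', i' 0))` when
`i` and `i'` agree on all later coordinates, and `0` otherwise. -/
def Emat (da d k : ℕ) (hk : 0 < k)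
    (W : Matrix (Fin da × Fin d) (Fin da × Fin d) ℂ) :
    Matrix (Fin da × (Fin k → Fin d)) (Fin da × (Fin k → Fin d)) ℂ :=
  fun p q =>
    if ∀ s : Fin (k - 1),
        p.2 ⟨(s : ℕ) + 1, by have := s.isLt; omega⟩ =
          q.2 ⟨(s : ℕ) + 1, by have := s.isLt; omega⟩
    then W (p.1, p.2 ⟨0, hk⟩) (q.1, q.2 ⟨0, hk⟩) else 0

/-- The adjoint operator `A†`. -/
def Adag (da d k : ℕ) (hk : 0 < k)
    (W : Matrix (Fin da × Fin d) (Fin da × Fin d) ℂ) :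
    Matrix (Fin da × Jk d k) (Fin da × Jk d k) ℂ :=
  ((1 : Matrix (Fin da) (Fin da) ℂ) ⊗ₖ Pmat d k)ᴴ * Emat da d k hk W *
    ((1 : Matrix (Fin da) (Fin da) ℂ) ⊗ₖ Pmat d k)

/-- Partial transpose in the second index. -/
def pTransp {m α : Type*} (M : Matrix (m × α) (m × α) ℂ) : Matrix (m × α) (m × α) ℂ :=
  fun p q => M (p.1, q.2) (q.1, p.2)

/-- Squared Frobenius norm. -/
def frobSq {α β : Type*} [Fintype α] [Fintype β] (M : Matrix α β ℂ) : ℝ :=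
  ∑ p, ∑ q, ‖M p q‖ ^ 2

/-- Largest eigenvalue of a Hermitian matrix. -/
def lamMax {n : Type*} [Fintype n] [DecidableEq n]
    {M : Matrix n n ℂ} (hM : M.IsHermitian) : ℝ :=
  ⨆ i, hM.eigenvalues i

end

/-!
Write `w j = permCount j ^ (-1/2)` and, for `r : Fin (k - 1) → Fin d`, `j_r = sort (b⌢r)`,
`j'_r = sort (b'⌢r)`. Then `A(Z)((a,b),(a',b')) = ∑ᵣ w(j_r) w(j'_r) Z((a,j_r),(a',j'_r))`, and
Cauchy–Schwarz in `r` bounds its square by `(∑ᵣ 1/perm j_r) · ∑ᵣ |Z((a,j_r),(a',j'_r))|² / perm j'_r`.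
The first factor is `d_k / d` for every `b`: relabelling the alphabet by the transposition of
`b` and `b'` shows it does not depend on `b`, and summed over `b` it is
`∑ᵢ 1/perm (sort i) = card J_k = d_k`. Summing the second factor over all entries, `b ↦ sort (b⌢r)`
is injective and `∑_{b',r} g (j'_r) / perm j'_r = ∑_j g j`, so `‖A(Z)‖² ≤ (d_k/d) ‖Z‖²`.
Finally `T` preserves the Frobenius norm and `‖X - Y‖² ≤ 2‖X‖² + 2‖Y‖²`.
-/

open Finset

section SortTuple

variable {d k : ℕ}

theorem sortTuple_eq_iff {i i' : Fin k → Fin d} :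
    sortTuple i = sortTuple i' ↔ ∃ σ : Equiv.Perm (Fin k), i' = i ∘ σ := by
  constructor
  · intro h
    have hv : i ∘ Tuple.sort i = i' ∘ Tuple.sort i' := congrArg Subtype.val h
    refine ⟨(Tuple.sort i').symm.trans (Tuple.sort i), funext fun s => ?_⟩
    simpa using (congrFun hv ((Tuple.sort i').symm s)).symm
  · rintro ⟨σ, rfl⟩
    exact (Subtype.ext Tuple.comp_perm_comp_sort_eq_comp_sort).symm

theorem sortTuple_comp_perm (i : Fin k → Fin d) (σ : Equiv.Perm (Fin k)) :
    sortTuple (i ∘ σ) = sortTuple i :=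
  (sortTuple_eq_iff.mpr ⟨σ, rfl⟩).symm

theorem sortTuple_val (j : Jk d k) : sortTuple j.val = j := by
  have : Tuple.sort j.val = Equiv.refl _ := Tuple.sort_eq_refl_iff_monotone.mpr j.2
  exact Subtype.ext (by simp [sortTuple, this])

theorem permCount_pos (j : Jk d k) : 0 < permCount j :=
  Finset.card_pos.mpr ⟨j.val, by simp [sortTuple_val j]⟩

theorem permCount_sortTuple_perm_comp (π : Equiv.Perm (Fin d)) (i : Fin k → Fin d) :
    permCount (sortTuple (π ∘ i)) = permCount (sortTuple i) := by
  unfold permCount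
  refine Finset.card_bij' (fun i' _ => π.symm ∘ i') (fun i' _ => π ∘ i') ?_ ?_
    (fun i' _ => by ext; simp) (fun i' _ => by ext; simp)
  · intro i' hi'
    obtain ⟨σ, rfl⟩ := sortTuple_eq_iff.mp (mem_filter.mp hi').2.symm
    simpa [← Function.comp_assoc] using sortTuple_comp_perm i σ
  · intro i' hi'
    obtain ⟨σ, rfl⟩ := sortTuple_eq_iff.mp (mem_filter.mp hi').2.symm
    simpa [Function.comp_assoc] using sortTuple_comp_perm (π ∘ i) σ

theorem sum_sortTuple {M : Type*} [AddCommMonoid M] (F : Jk d k → M) :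
    ∑ i : Fin k → Fin d, F (sortTuple i) = ∑ j, permCount j • F j := by
  rw [← sum_fiberwise univ sortTuple]
  refine sum_congr rfl fun j _ => ?_
  rw [sum_congr rfl fun i hi => congrArg F (mem_filter.mp hi).2, sum_const]
  rfl

def tupleMultiset (i : Fin k → Fin d) : Multiset (Fin d) := (List.ofFn i : List (Fin d))

theorem tupleMultiset_comp_perm (i : Fin k → Fin d) (σ : Equiv.Perm (Fin k)) :
    tupleMultiset (i ∘ σ) = tupleMultiset i :=
  Quot.sound (σ.ofFn_comp_perm i)

theorem tupleMultiset_eq_of_sortTuple_eq {i i' : Fin k → Fin d}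
    (h : sortTuple i = sortTuple i') : tupleMultiset i = tupleMultiset i' := by
  obtain ⟨σ, rfl⟩ := sortTuple_eq_iff.mp h
  exact (tupleMultiset_comp_perm i σ).symm

theorem card_Jk : Fintype.card (Jk d k) = Nat.choose (d + k - 1) k := by
  let e : Jk d k ≃ Sym (Fin d) k := by
    refine Equiv.ofBijective (fun j => ⟨tupleMultiset j.val, by simp [tupleMultiset]⟩) ⟨?_, ?_⟩
    · rintro ⟨j, hj⟩ ⟨j', hj'⟩ h
      have hperm : (List.ofFn j).Perm (List.ofFn j') :=
        Multiset.coe_eq_coe.mp (congrArg Subtype.val h)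
      exact Subtype.ext <| List.ofFn_injective <| hperm.eq_of_sortedLE
        (List.sortedLE_ofFn_iff.mpr hj) (List.sortedLE_ofFn_iff.mpr hj')
    · rintro ⟨s, hs⟩
      obtain ⟨l, rfl⟩ := Quot.exists_rep s
      have hl : l.length = k := hs
      refine ⟨sortTuple (fun t => l.get (Fin.cast hl.symm t)), Subtype.ext ?_⟩
      change tupleMultiset ((fun t => l.get (Fin.cast hl.symm t)) ∘ Tuple.sort _) = (l : Multiset _)
      rw [tupleMultiset_comp_perm]
      exact congrArg _ (List.ext_get (by simp [hl]) (by simp))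
  rw [Fintype.card_congr e, Sym.card_sym_eq_multichoose, Fintype.card_fin, Nat.multichoose_eq]

end SortTuple

section Cons0

variable {d k : ℕ}

def cons0Equiv (hk : 0 < k) : Fin d × (Fin (k - 1) → Fin d) ≃ (Fin k → Fin d) where
  toFun p := cons0 p.1 p.2
  invFun i := (i ⟨0, hk⟩, fun s => i ⟨(s : ℕ) + 1, by omega⟩)
  left_inv := by
    rintro ⟨b, r⟩
    refine Prod.ext (by simp [cons0]) (funext fun s => ?_)
    simp only [cons0, dif_neg (Nat.succ_ne_zero _)]
    rfl
  right_inv := by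
    intro i
    funext s
    by_cases h : (s : ℕ) = 0
    · simp only [cons0, dif_pos h]
      exact congrArg i (Fin.ext h.symm)
    · simp only [cons0, dif_neg h]
      exact congrArg i (Fin.ext (by simp; omega))

theorem comp_cons0 (π : Fin d → Fin d) (b : Fin d) (r : Fin (k - 1) → Fin d) :
    π ∘ cons0 b r = cons0 (π b) (π ∘ r) := by
  funext s
  by_cases h : (s : ℕ) = 0 <;> simp [cons0, h]

theorem tupleMultiset_cons0 (hk : 0 < k) (b : Fin d) (r : Fin (k - 1) → Fin d) :
    tupleMultiset (cons0 b r) = b ::ₘ tupleMultiset r := by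
  obtain ⟨m, rfl⟩ : ∃ m, k = m + 1 := ⟨k - 1, by omega⟩
  have hhead : cons0 b r 0 = b := by simp [cons0]
  have htail : (fun s : Fin m => cons0 b r s.succ) = r := by
    funext s
    simp only [cons0, Fin.val_succ, dif_neg (Nat.succ_ne_zero _)]
    rfl
  change ((List.ofFn (cons0 b r) : List (Fin d)) : Multiset (Fin d)) = _
  rw [List.ofFn_succ, hhead, htail]
  rfl

theorem sortTuple_cons0_injective (hk : 0 < k) (r : Fin (k - 1) → Fin d) :
    Function.Injective fun b => sortTuple (cons0 b r) := by
  intro b b' h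
  have h' := congrArg (Multiset.count b) (tupleMultiset_eq_of_sortTuple_eq h)
  by_contra hne
  rw [tupleMultiset_cons0 hk, tupleMultiset_cons0 hk, Multiset.count_cons_self,
    Multiset.count_cons_of_ne hne] at h'
  omega

theorem sum_sortTuple_cons0 (hk : 0 < k) {M : Type*} [AddCommMonoid M] (F : Jk d k → M) :
    ∑ b, ∑ r : Fin (k - 1) → Fin d, F (sortTuple (cons0 b r)) = ∑ j, permCount j • F j := by
  rw [← sum_sortTuple, ← (cons0Equiv hk).sum_comp, Fintype.sum_prod_type]
  rfl

theorem sum_sortTuple_cons0_inv_permCount_mul (hk : 0 < k) (g : Jk d k → ℝ) :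
    ∑ b, ∑ r : Fin (k - 1) → Fin d,
        (permCount (sortTuple (cons0 b r)) : ℝ)⁻¹ * g (sortTuple (cons0 b r)) = ∑ j, g j := by
  rw [sum_sortTuple_cons0 hk (fun j => (permCount j : ℝ)⁻¹ * g j)]
  refine sum_congr rfl fun j _ => ?_
  rw [nsmul_eq_mul, ← mul_assoc, mul_inv_cancel₀ (Nat.cast_ne_zero.mpr (permCount_pos j).ne'),
    one_mul]

theorem sum_inv_permCount_cons0_eq (b b' : Fin d) :
    ∑ r : Fin (k - 1) → Fin d, (permCount (sortTuple (cons0 b r)) : ℝ)⁻¹ =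
      ∑ r : Fin (k - 1) → Fin d, (permCount (sortTuple (cons0 b' r)) : ℝ)⁻¹ := by
  refine Fintype.sum_equiv (Equiv.piCongrRight fun _ => Equiv.swap b b') _ _ fun r => ?_
  have : cons0 b' (Equiv.swap b b' ∘ r) = Equiv.swap b b' ∘ cons0 b r := by
    rw [comp_cons0, Equiv.swap_apply_left]
  change _ = (permCount (sortTuple (cons0 b' (Equiv.swap b b' ∘ r))) : ℝ)⁻¹
  rw [this, permCount_sortTuple_perm_comp]

theorem sum_inv_permCount_cons0 (hk : 0 < k) (b : Fin d) :
    ∑ r : Fin (k - 1) → Fin d, (permCount (sortTuple (cons0 b r)) : ℝ)⁻¹ =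
      (Nat.choose (d + k - 1) k : ℝ) / d := by
  have htotal := sum_sortTuple_cons0_inv_permCount_mul hk (d := d) fun _ => 1
  simp only [mul_one, sum_const, card_univ, card_Jk, nsmul_eq_mul] at htotal
  rw [sum_congr rfl fun b' _ => sum_inv_permCount_cons0_eq b' b, sum_const, card_univ,
    Fintype.card_fin, nsmul_eq_mul] at htotal
  have hd : (d : ℝ) ≠ 0 := Nat.cast_ne_zero.mpr (Fin.pos b).ne'
  rw [eq_div_iff hd, mul_comm, htotal]

end Cons0

section Amap

variable {da d k : ℕ}

/-- The nonzero entries of `Pmat`: `Pmat d k i j = permWeight j` when `sortTuple i = j`. -/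
noncomputable def permWeight (j : Jk d k) : ℝ := (permCount j : ℝ) ^ (-(1/2) : ℝ)

theorem permWeight_nonneg (j : Jk d k) : 0 ≤ permWeight j :=
  Real.rpow_nonneg (Nat.cast_nonneg _) _

theorem permWeight_sq (j : Jk d k) : permWeight j ^ 2 = (permCount j : ℝ)⁻¹ := by
  rw [permWeight, ← Real.rpow_natCast, ← Real.rpow_mul (Nat.cast_nonneg _)]
  norm_num [Real.rpow_neg_one]

theorem one_kronecker_Pmat_mul_mul_conjTranspose_apply
    (Z : Matrix (Fin da × Jk d k) (Fin da × Jk d k) ℂ) (a a' : Fin da) (i i' : Fin k → Fin d) :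
    (((1 : Matrix (Fin da) (Fin da) ℂ) ⊗ₖ Pmat d k) * Z *
        ((1 : Matrix (Fin da) (Fin da) ℂ) ⊗ₖ Pmat d k)ᴴ) (a, i) (a', i') =
      (permWeight (sortTuple i) : ℂ) * permWeight (sortTuple i') *
        Z (a, sortTuple i) (a', sortTuple i') := by
  simp only [mul_apply, conjTranspose_apply, kroneckerMap_apply, one_apply, Pmat,
    Fintype.sum_prod_type, ite_mul, mul_ite, one_mul, zero_mul, mul_zero,
    apply_ite (star : ℂ → ℂ), star_zero, RCLike.star_def, Complex.conj_ofReal, sum_ite_eq,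
    mem_univ, if_true, permWeight]
  ring

theorem Amap_apply (Z : Matrix (Fin da × Jk d k) (Fin da × Jk d k) ℂ) (a a' : Fin da)
    (b b' : Fin d) :
    Amap da d k Z (a, b) (a', b') =
      ∑ r : Fin (k - 1) → Fin d,
        (permWeight (sortTuple (cons0 b r)) : ℂ) * permWeight (sortTuple (cons0 b' r)) *
          Z (a, sortTuple (cons0 b r)) (a', sortTuple (cons0 b' r)) :=
  sum_congr rfl fun _ _ => one_kronecker_Pmat_mul_mul_conjTranspose_apply Z a a' _ _

/-- Cauchy–Schwarz in `r`, splitting each term as `w(j_r) · (w(j'_r) |Z(…)|)`. -/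
theorem norm_Amap_apply_sq_le (hk : 0 < k) (Z : Matrix (Fin da × Jk d k) (Fin da × Jk d k) ℂ)
    (a a' : Fin da) (b b' : Fin d) :
    ‖Amap da d k Z (a, b) (a', b')‖ ^ 2 ≤
      (Nat.choose (d + k - 1) k : ℝ) / d *
        ∑ r : Fin (k - 1) → Fin d, (permCount (sortTuple (cons0 b' r)) : ℝ)⁻¹ *
          ‖Z (a, sortTuple (cons0 b r)) (a', sortTuple (cons0 b' r))‖ ^ 2 := by
  have hnorm : ‖Amap da d k Z (a, b) (a', b')‖ ≤
      ∑ r : Fin (k - 1) → Fin d, permWeight (sortTuple (cons0 b r)) *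
        (permWeight (sortTuple (cons0 b' r)) *
          ‖Z (a, sortTuple (cons0 b r)) (a', sortTuple (cons0 b' r))‖) := by
    rw [Amap_apply]
    refine (norm_sum_le _ _).trans_eq (sum_congr rfl fun r _ => ?_)
    rw [norm_mul, norm_mul, Complex.norm_of_nonneg (permWeight_nonneg _),
      Complex.norm_of_nonneg (permWeight_nonneg _), mul_assoc]
  refine (pow_le_pow_left₀ (norm_nonneg _) hnorm 2).trans
    ((sum_mul_sq_le_sq_mul_sq _ _ _).trans_eq ?_)
  simp only [permWeight_sq, mul_pow]
  rw [sum_inv_permCount_cons0 hk]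

theorem Function.Injective.sum_comp_le_sum {α β M : Type*} [Fintype α] [Fintype β]
    [AddCommMonoid M] [PartialOrder M] [IsOrderedAddMonoid M] {e : α → β}
    (he : Function.Injective e) {f : β → M} (hf : ∀ x, 0 ≤ f x) :
    ∑ a, f (e a) ≤ ∑ b, f b := by
  classical
  rw [← sum_image fun x _ y _ h => he h]
  exact sum_le_sum_of_subset_of_nonneg (subset_univ _) fun x _ _ => hf x

theorem frobSq_Amap_le (hk : 0 < k) (Z : Matrix (Fin da × Jk d k) (Fin da × Jk d k) ℂ) :
    frobSq (Amap da d k Z) ≤ (Nat.choose (d + k - 1) k : ℝ) / d * frobSq Z := by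
  set j : Fin d → (Fin (k - 1) → Fin d) → Jk d k := fun b r => sortTuple (cons0 b r)
  set w : Fin d → (Fin (k - 1) → Fin d) → ℝ := fun b r => (permCount (j b r) : ℝ)⁻¹
  let colSq : Fin da × Jk d k → ℝ := fun q => ∑ p, ‖Z p q‖ ^ 2
  calc frobSq (Amap da d k Z)
      ≤ ∑ p : Fin da × Fin d, ∑ q : Fin da × Fin d, (Nat.choose (d + k - 1) k : ℝ) / d *
          ∑ r, w q.2 r * ‖Z (p.1, j p.2 r) (q.1, j q.2 r)‖ ^ 2 :=
        sum_le_sum fun p _ => sum_le_sum fun q _ => norm_Amap_apply_sq_le hk Z _ _ _ _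
    _ = (Nat.choose (d + k - 1) k : ℝ) / d * ∑ q : Fin da × Fin d, ∑ r,
          w q.2 r * ∑ p : Fin da × Fin d, ‖Z (p.1, j p.2 r) (q.1, j q.2 r)‖ ^ 2 := by
        simp only [mul_sum]
        rw [sum_comm]
        exact sum_congr rfl fun q _ => sum_comm
    _ ≤ (Nat.choose (d + k - 1) k : ℝ) / d * ∑ q : Fin da × Fin d, ∑ r,
          w q.2 r * colSq (q.1, j q.2 r) := by
        gcongr with q _ r _
        exact (Function.injective_id.prodMap (sortTuple_cons0_injective hk r)).sum_comp_le_sum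
            (f := fun p => ‖Z (p.1, p.2) (q.1, j q.2 r)‖ ^ 2) fun _ => by positivity
    _ = (Nat.choose (d + k - 1) k : ℝ) / d * frobSq Z := by
        rw [show frobSq Z = ∑ q, colSq q from sum_comm, Fintype.sum_prod_type,
          Fintype.sum_prod_type]
        exact congrArg _ (sum_congr rfl fun a' _ =>
          sum_sortTuple_cons0_inv_permCount_mul hk fun j' => colSq (a', j'))

end Amap

section Frobenius

variable {α β : Type*} [Fintype α] [Fintype β]

theorem frobSq_nonneg (M : Matrix α β ℂ) : 0 ≤ frobSq M := by
  unfold frobSq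
  positivity

theorem frobSq_sub_le (X Y : Matrix α β ℂ) : frobSq (X - Y) ≤ 2 * frobSq X + 2 * frobSq Y := by
  simp only [frobSq, mul_sum, ← sum_add_distrib]
  gcongr with p _ q _
  calc ‖(X - Y) p q‖ ^ 2 ≤ (‖X p q‖ + ‖Y p q‖) ^ 2 := by gcongr; exact norm_sub_le _ _
    _ ≤ 2 * ‖X p q‖ ^ 2 + 2 * ‖Y p q‖ ^ 2 := by linarith [add_sq_le (a := ‖X p q‖) (b := ‖Y p q‖)]

theorem frobSq_pTransp (M : Matrix (α × β) (α × β) ℂ) : frobSq (pTransp M) = frobSq M := by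
  simp only [frobSq, pTransp, Fintype.sum_prod_type]
  refine sum_congr rfl fun a _ => ?_
  rw [sum_comm, sum_congr rfl fun a' _ => sum_comm]
  exact sum_comm

end Frobenius

theorem stmt11_general (da d k : ℕ) (hd : 0 < d) (hk : 0 < k)
    (Z W' : Matrix (Fin da × Jk d k) (Fin da × Jk d k) ℂ) :
    frobSq (Amap da d k Z) + frobSq (pTransp Z - W') ≤
      (((Nat.choose (d + k - 1) k : ℝ) + 2 * d) / d) * (frobSq Z + frobSq W') := by
  have hA := frobSq_Amap_le hk Z
  have hT : frobSq (pTransp Z - W') ≤ 2 * frobSq Z + 2 * frobSq W' :=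
    frobSq_pTransp Z ▸ frobSq_sub_le (pTransp Z) W'
  have hsplit : ((Nat.choose (d + k - 1) k : ℝ) + 2 * d) / d =
      (Nat.choose (d + k - 1) k : ℝ) / d + 2 := by
    field_simp
  have hC : 0 ≤ (Nat.choose (d + k - 1) k : ℝ) / d := by positivity
  rw [hsplit]
  nlinarith [frobSq_nonneg Z, frobSq_nonneg W']

theorem stmt11 (da d k : ℕ) (hda : 0 < da) (hd : 0 < d) (hk : 0 < k)
    (Z W' : Matrix (Fin da × Jk d k) (Fin da × Jk d k) ℂ)
    (hZ : Z.IsHermitian) (hW' : W'.IsHermitian) :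
    frobSq (Amap da d k Z) + frobSq (pTransp Z - W') ≤
      (((Nat.choose (d + k - 1) k : ℝ) + 2 * d) / d) * (frobSq Z + frobSq W') :=
  stmt11_general da d k hd hk Z W'
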